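/- There is a universal constant C > 0 such that the following holds for every n ≥ 2 and every instance with marginal distributions F_1,...,F_n on the nonnegative reals having finite Myerson revenues: there exist a subset S ⊆ {1,...,n} whose Myerson revenues are at most a factor 2 apart (max_{i∈S} Mye(F_i) ≤ 2 · min_{i∈S} Mye(F_i)) and a pricing p with p_j = ∞ for every j ∉ S, such that p is (C·log n)-max-min optimal, i.e., C·(log n)·R(p) ≥ R*. -/

import Mathlib

open MeasureTheory
open scoped ENNReal NNReal

noncomputable section

/-- A buyer's purchase rule for `n` items: given a valuation profile and a vector of item prices
(in `[0,∞]`), `choose` returns the purchased item (or `none` if nothing is purchased).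
The axioms say: a purchased item has a finite price and yields nonnegative utility
(`feasible`), the purchased item maximizes utility among all items (`optimal`), and the buyer
does purchase whenever some item yields nonnegative utility (`active`). Ties among
utility-maximizing items are broken according to the (fixed) rule embodied by `choose`. -/
structure BuyerRule (n : ℕ) where
  choose : (Fin n → ℝ) → (Fin n → ℝ≥0∞) → Option (Fin n)
  feasible : ∀ v p j, choose v p = some j → p j ≠ ⊤ ∧ (p j).toReal ≤ v j
  optimal : ∀ v p j k, choose v p = some j → p k ≠ ⊤ →
      v k - (p k).toReal ≤ v j - (p j).toReal
  active : ∀ v p, (∃ k, p k ≠ ⊤ ∧ (p k).toReal ≤ v k) → (choose v p).isSome = true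

/-- The seller's revenue from valuation profile `v` under pricing `p`. -/
def BuyerRule.revenue {n : ℕ} (B : BuyerRule n) (p : Fin n → ℝ≥0∞) (v : Fin n → ℝ) : ℝ≥0∞ :=
  (B.choose v p).elim 0 (fun j => p j)

/-- A joint distribution `F` on valuation profiles is compatible with the marginals `marg`
if it is a probability measure whose `j`-th one-dimensional marginal is `marg j` for every `j`. -/
def Compatible {n : ℕ} (marg : Fin n → Measure ℝ) (F : Measure (Fin n → ℝ)) : Prop :=
  IsProbabilityMeasure F ∧ ∀ j, F.map (fun v => v j) = marg j

/-- `R(p,F)`: the expected revenue of pricing `p` under joint distribution `F`. -/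
def expRev {n : ℕ} (B : BuyerRule n) (p : Fin n → ℝ≥0∞) (F : Measure (Fin n → ℝ)) : ℝ≥0∞ :=
  ∫⁻ v, B.revenue p v ∂F

/-- `R(p)`: the robust revenue guarantee of `p`, the infimum of `R(p,F)` over compatible `F`. -/
def robustRev {n : ℕ} (B : BuyerRule n) (marg : Fin n → Measure ℝ) (p : Fin n → ℝ≥0∞) : ℝ≥0∞ :=
  ⨅ (F : Measure (Fin n → ℝ)) (_ : Compatible marg F), expRev B p F

/-- `R*`: the optimal robust revenue guarantee over all pricings. -/
def optRobust {n : ℕ} (B : BuyerRule n) (marg : Fin n → Measure ℝ) : ℝ≥0∞ :=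
  ⨆ p : Fin n → ℝ≥0∞, robustRev B marg p

/-- The Myerson (monopoly) revenue of a single-item distribution `μ`:
`Mye(μ) = sup_{x ≥ 0} x · Pr_{v ~ μ}[v ≥ x]`. -/
def Mye (μ : Measure ℝ) : ℝ≥0∞ :=
  ⨆ x : ℝ≥0, (x : ℝ≥0∞) * μ {v : ℝ | (x : ℝ) ≤ v}

/-! Sort the items into dyadic classes by Myerson revenue relative to the largest one, `M`:
`O(log n)` classes cover every item with Myerson revenue at least `M / n`, and the leftover items
have total Myerson revenue at most `M`, which a single posted price already guarantees.

For a pricing `p` and a class `T`, let `p_T` halve the prices on `T` and withdraw all other items.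
Gluing near-worst-case joint distributions for the `p_T`, independently across the classes, gives
a compatible distribution under which `p` earns at most `∑_T 2 R(p_T)`: the price paid for an item
of `T` is at most the largest price among the utility maximizers within `T`, which depends only on
the values in `T`, and a buyer facing `p_T` pays at least half of it, whatever the tie-breaking.
So `R*` is at most twice the number of classes times the best guarantee of a pricing supported on
one class. -/

section Glue

variable {ι κ X : Type*} [MeasurableSpace X]

lemma measurable_glueBlocks_map (b : ι → κ) : Measurable fun (ω : κ → ι → X) i => ω (b i) i :=
  measurable_pi_lambda _ fun i => (measurable_pi_apply i).comp (measurable_pi_apply (b i))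

variable [Fintype κ]

/-- The coordinates in the block `{i | b i = k}` are drawn from `F k`, independently across
blocks. -/
def glueBlocks (b : ι → κ) (F : κ → Measure (ι → X)) : Measure (ι → X) :=
  (Measure.pi F).map fun ω i => ω (b i) i

variable (b : ι → κ) (F : κ → Measure (ι → X)) [∀ k, IsProbabilityMeasure (F k)]

instance : IsProbabilityMeasure (glueBlocks b F) :=
  Measure.isProbabilityMeasure_map (measurable_glueBlocks_map b).aemeasurable

lemma glueBlocks_map_eval (i : ι) :
    (glueBlocks b F).map (Function.eval i) = (F (b i)).map (Function.eval i) := by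
  rw [glueBlocks, Measure.map_map (measurable_pi_apply i) (measurable_glueBlocks_map b),
    ← (measurePreserving_eval F (b i)).map_eq,
    Measure.map_map (measurable_pi_apply i) (measurable_pi_apply (b i))]
  rfl

lemma lintegral_glueBlocks {k : κ} {f : (ι → X) → ℝ≥0∞} (hf : Measurable f)
    (hdep : DependsOn f {i | b i = k}) :
    ∫⁻ v, f v ∂glueBlocks b F = ∫⁻ v, f v ∂F k := by
  rw [glueBlocks, lintegral_map hf (measurable_glueBlocks_map b),
    ← (measurePreserving_eval F k).lintegral_comp hf]
  exact lintegral_congr fun ω => hdep fun i (hi : b i = k) => by simp [hi]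

end Glue

lemma ENNReal.iInf_pi_sum {κ ι : Type*} [Nonempty ι] (s : Finset κ) (g : κ → ι → ℝ≥0∞) :
    ⨅ σ : κ → ι, ∑ k ∈ s, g k (σ k) = ∑ k ∈ s, ⨅ i, g k i := by
  rw [ENNReal.iInf_sum fun _ σ τ => ⟨fun k => if g k (σ k) ≤ g k (τ k) then σ k else τ k,
    fun k _ => by dsimp only; split_ifs with h <;> simp [h, le_of_not_ge]⟩]
  exact Finset.sum_congr rfl fun k _ =>
    (Function.surjective_eval (β := fun _ => ι) k).iInf_comp (g k)

lemma ENNReal.exists_iSup_le_two_mul {ι : Type*} [Nonempty ι] {f : ι → ℝ≥0∞}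
    (hf : ⨆ i, f i ≠ ⊤) : ∃ i, ⨆ i, f i ≤ 2 * f i := by
  rcases eq_or_ne (⨆ i, f i) 0 with h | h
  · exact ⟨Classical.arbitrary ι, by simp [h]⟩
  · obtain ⟨i, hi⟩ := lt_iSup_iff.1 (ENNReal.half_lt_self h hf)
    exact ⟨i, (ENNReal.div_le_iff_le_mul (by simp) (by simp)).1 hi.le |>.trans_eq (mul_comm _ _)⟩

namespace BuyerRule

variable {n : ℕ} (B : BuyerRule n) {p : Fin n → ℝ≥0∞} {v : Fin n → ℝ}

lemma revenue_eq_of_choose_eq_some {j : Fin n} (h : B.choose v p = some j) :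
    B.revenue p v = p j := by
  simp [revenue, h]

lemma revenue_le {c : ℝ≥0∞} (h : ∀ j, B.choose v p = some j → p j ≤ c) :
    B.revenue p v ≤ c := by
  rcases hc : B.choose v p with _ | j
  · simp [revenue, hc]
  · exact (B.revenue_eq_of_choose_eq_some hc).trans_le (h j hc)

lemma exists_choose_eq_some {k : Fin n} (hk : p k ≠ ⊤) (hkv : (p k).toReal ≤ v k) :
    ∃ j, B.choose v p = some j :=
  Option.isSome_iff_exists.1 (B.active v p ⟨k, hk, hkv⟩)

end BuyerRule

section Robust

variable {n : ℕ} (B : BuyerRule n) (marg : Fin n → Measure ℝ)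

lemma compatible_pi [∀ j, IsProbabilityMeasure (marg j)] : Compatible marg (Measure.pi marg) :=
  ⟨inferInstance, fun j => (measurePreserving_eval marg j).map_eq⟩

variable {marg}

lemma Compatible.measure_preimage_eval {F : Measure (Fin n → ℝ)} (hF : Compatible marg F)
    (j : Fin n) {s : Set ℝ} (hs : MeasurableSet s) : F {v | v j ∈ s} = marg j s := by
  rw [← hF.2 j, Measure.map_apply (measurable_pi_apply j) hs]
  rfl

def affordable (p : Fin n → ℝ≥0∞) (j : Fin n) : Set (Fin n → ℝ) :=
  {v | p j ≠ ⊤ ∧ (p j).toReal ≤ v j}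

lemma measurableSet_affordable (p : Fin n → ℝ≥0∞) (j : Fin n) :
    MeasurableSet (affordable p j) := by
  by_cases hp : p j = ⊤
  · simp [affordable, hp]
  · simpa [affordable, hp] using measurableSet_le measurable_const (measurable_pi_apply j)

lemma Compatible.mul_measure_affordable_le_Mye {F : Measure (Fin n → ℝ)}
    (hF : Compatible marg F) (p : Fin n → ℝ≥0∞) (j : Fin n) :
    p j * F (affordable p j) ≤ Mye (marg j) := by
  by_cases hp : p j = ⊤
  · simp [affordable, hp]
  obtain ⟨x, hx⟩ : ∃ x : ℝ≥0, (x : ℝ≥0∞) = p j := ⟨_, ENNReal.coe_toNNReal hp⟩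
  have hset : affordable p j = {v | v j ∈ Set.Ici (x : ℝ)} := by
    ext v; simp [affordable, ← hx]
  rw [hset, hF.measure_preimage_eval j measurableSet_Ici, ← hx]
  exact le_iSup (fun x : ℝ≥0 => (x : ℝ≥0∞) * marg j {v | (x : ℝ) ≤ v}) x

lemma revenue_le_sum_indicator_affordable {T : Finset (Fin n)} {q : Fin n → ℝ≥0∞}
    (hq : ∀ j ∉ T, q j = ⊤) (v : Fin n → ℝ) :
    B.revenue q v ≤ ∑ j ∈ T, (affordable q j).indicator (fun _ => q j) v := by
  refine B.revenue_le fun j hj => ?_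
  have hbuy := B.feasible v q j hj
  have hjT : j ∈ T := by_contra fun h => hbuy.1 (hq j h)
  calc q j = (affordable q j).indicator (fun _ => q j) v := by simp [affordable, hbuy]
    _ ≤ _ := Finset.single_le_sum (f := fun j => (affordable q j).indicator (fun _ => q j) v)
        (fun _ _ => bot_le) hjT

lemma expRev_le_sum_Mye {F : Measure (Fin n → ℝ)} (hF : Compatible marg F) {T : Finset (Fin n)}
    {q : Fin n → ℝ≥0∞} (hq : ∀ j ∉ T, q j = ⊤) :
    expRev B q F ≤ ∑ j ∈ T, Mye (marg j) :=
  calc expRev B q F ≤ ∫⁻ v, ∑ j ∈ T, (affordable q j).indicator (fun _ => q j) v ∂F :=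
        lintegral_mono (revenue_le_sum_indicator_affordable B hq)
    _ = ∑ j ∈ T, q j * F (affordable q j) := by
        rw [lintegral_finsetSum _ fun j _ =>
          measurable_const.indicator (measurableSet_affordable q j)]
        simp_rw [lintegral_indicator_const (measurableSet_affordable q _)]
    _ ≤ ∑ j ∈ T, Mye (marg j) :=
        Finset.sum_le_sum fun j _ => hF.mul_measure_affordable_le_Mye q j

lemma robustRev_le_sum_Mye [∀ j, IsProbabilityMeasure (marg j)] {T : Finset (Fin n)}
    {q : Fin n → ℝ≥0∞} (hq : ∀ j ∉ T, q j = ⊤) :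
    robustRev B marg q ≤ ∑ j ∈ T, Mye (marg j) :=
  (iInf₂_le _ (compatible_pi marg)).trans (expRev_le_sum_Mye B (compatible_pi marg) hq)

def singlePrice (j : Fin n) (x : ℝ≥0) : Fin n → ℝ≥0∞ :=
  Function.update (fun _ => ⊤) j x

lemma revenue_singlePrice {j : Fin n} {x : ℝ≥0} {v : Fin n → ℝ} (hv : (x : ℝ) ≤ v j) :
    B.revenue (singlePrice j x) v = x := by
  obtain ⟨c, hc⟩ := B.exists_choose_eq_some (p := singlePrice j x) (v := v) (k := j)
    (by simp [singlePrice]) (by simpa [singlePrice])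
  have hcj : c = j := by_contra fun h => (B.feasible _ _ c hc).1 (by simp [singlePrice, h])
  rw [B.revenue_eq_of_choose_eq_some hc, hcj]
  simp [singlePrice]

lemma Mye_le_iSup_robustRev_singlePrice (j : Fin n) :
    Mye (marg j) ≤ ⨆ x : ℝ≥0, robustRev B marg (singlePrice j x) := by
  refine iSup_mono fun x => le_iInf₂ fun F hF => ?_
  have hmeas : MeasurableSet {v : Fin n → ℝ | v j ∈ Set.Ici (x : ℝ)} :=
    measurable_pi_apply j measurableSet_Ici
  calc (x : ℝ≥0∞) * marg j {y | (x : ℝ) ≤ y}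
      = ∫⁻ v, {v | v j ∈ Set.Ici (x : ℝ)}.indicator (fun _ => (x : ℝ≥0∞)) v ∂F := by
        rw [lintegral_indicator_const hmeas, hF.measure_preimage_eval j measurableSet_Ici]
        rfl
    _ ≤ expRev B (singlePrice j x) F := lintegral_mono fun v => by
        by_cases hv : (x : ℝ) ≤ v j
        · simp [hv, revenue_singlePrice B hv]
        · simp [hv]

end Robust

section BestWithin

variable {n : ℕ}

def halvedOn (T : Finset (Fin n)) (p : Fin n → ℝ≥0∞) : Fin n → ℝ≥0∞ :=
  fun j => if j ∈ T then p j / 2 else ⊤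

lemma halvedOn_of_notMem {T : Finset (Fin n)} {j : Fin n} (hj : j ∉ T) (p : Fin n → ℝ≥0∞) :
    halvedOn T p j = ⊤ := by
  simp [halvedOn, hj]

def IsBestWithin (T : Finset (Fin n)) (p : Fin n → ℝ≥0∞) (v : Fin n → ℝ) (j : Fin n) : Prop :=
  p j ≠ ⊤ ∧ (p j).toReal ≤ v j ∧ ∀ i ∈ T, p i ≠ ⊤ → v i - (p i).toReal ≤ v j - (p j).toReal

open Classical in
/-- The revenue of `p` from a buyer who only considers the items of `T` and breaks ties in favour
of the seller. -/
def bestPriceWithin (T : Finset (Fin n)) (p : Fin n → ℝ≥0∞) (v : Fin n → ℝ) : ℝ≥0∞ :=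
  ⨆ j ∈ T, if IsBestWithin T p v j then p j else 0

variable (T : Finset (Fin n)) (p : Fin n → ℝ≥0∞)

lemma measurableSet_isBestWithin (j : Fin n) : MeasurableSet {v | IsBestWithin T p v j} := by
  simp only [IsBestWithin, Set.ofPred_and]
  refine (MeasurableSet.const _).inter
    ((measurableSet_le measurable_const (measurable_pi_apply j)).inter ?_)
  simp only [Set.ofPred_forall]
  exact .biInter (Set.to_countable _) fun i _ => .iInter fun _ =>
    measurableSet_le (by fun_prop) (by fun_prop)

lemma measurable_bestPriceWithin : Measurable (bestPriceWithin T p) := by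
  classical
  exact .biSup _ (Set.to_countable _) fun j _ =>
    Measurable.ite (measurableSet_isBestWithin T p j) measurable_const measurable_const

lemma dependsOn_bestPriceWithin : DependsOn (bestPriceWithin T p) T := by
  classical
  intro v w hvw
  have hbest : ∀ j ∈ T, IsBestWithin T p v j ↔ IsBestWithin T p w j := fun j hj => by
    simp only [IsBestWithin, hvw j hj]
    exact and_congr_right' (and_congr_right' (forall₂_congr fun i hi => by rw [hvw i hi]))
  unfold bestPriceWithin
  exact iSup_congr fun j => iSup_congr fun hj => if_congr (hbest j hj) rfl rfl

variable (B : BuyerRule n) {v : Fin n → ℝ}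

lemma price_le_bestPriceWithin {j : Fin n} (hj : B.choose v p = some j) (hjT : j ∈ T) :
    p j ≤ bestPriceWithin T p v := by
  classical
  have hbest : IsBestWithin T p v j :=
    ⟨(B.feasible v p j hj).1, (B.feasible v p j hj).2, fun i _ hi => B.optimal v p j i hj hi⟩
  exact le_iSup₂_of_le j hjT (by simp [hbest])

lemma bestPriceWithin_le_two_mul_revenue_halvedOn :
    bestPriceWithin T p v ≤ 2 * B.revenue (halvedOn T p) v := by
  refine iSup₂_le fun j hjT => ?_
  split_ifs with hbest
  swap
  · exact bot_le
  obtain ⟨hjtop, hjv, hjmax⟩ := hbest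
  have hhalf : ∀ i ∈ T, p i ≠ ⊤ → halvedOn T p i = p i / 2 ∧ halvedOn T p i ≠ ⊤ ∧
      (halvedOn T p i).toReal = (p i).toReal / 2 := fun i hi hi' => by
    simp [halvedOn, hi, ENNReal.div_eq_top, hi', ENNReal.toReal_div]
  obtain ⟨hj₁, hj₂, hj₃⟩ := hhalf j hjT hjtop
  obtain ⟨c, hc⟩ := B.exists_choose_eq_some (v := v) (k := j) hj₂
    (by rw [hj₃]; linarith [(p j).toReal_nonneg])
  have hcT : c ∈ T ∧ p c ≠ ⊤ := by
    have hfin := (B.feasible _ _ c hc).1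
    by_cases hcT : c ∈ T
    · exact ⟨hcT, fun h => hfin (by simp [halvedOn, hcT, h, ENNReal.div_eq_top])⟩
    · exact absurd (halvedOn_of_notMem hcT p) hfin
  obtain ⟨hc₁, -, hc₃⟩ := hhalf c hcT.1 hcT.2
  -- `c` beats `j` at the halved prices and `j` beats `c` at the full ones; adding, `p j ≤ p c`
  have hopt := B.optimal v _ c j hc hj₂
  have hmax := hjmax c hcT.1 hcT.2
  rw [hj₃, hc₃] at hopt
  rw [B.revenue_eq_of_choose_eq_some hc, hc₁,
    ENNReal.mul_div_cancel two_ne_zero ENNReal.ofNat_ne_top]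
  exact (ENNReal.toReal_le_toReal hjtop hcT.2).1 (by linarith)

lemma lintegral_bestPriceWithin_le (F : Measure (Fin n → ℝ)) :
    ∫⁻ v, bestPriceWithin T p v ∂F ≤ 2 * expRev B (halvedOn T p) F := by
  rw [expRev, ← lintegral_const_mul' _ _ ENNReal.ofNat_ne_top]
  exact lintegral_mono fun v => bestPriceWithin_le_two_mul_revenue_halvedOn T p B

lemma revenue_le_sum_bestPriceWithin {κ : Type*} [Fintype κ] [DecidableEq κ] (b : Fin n → κ)
    (v : Fin n → ℝ) :
    B.revenue p v ≤ ∑ k, bestPriceWithin {j | b j = k} p v :=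
  B.revenue_le fun j hj =>
    (price_le_bestPriceWithin _ p B hj (by simp)).trans
      (Finset.single_le_sum (f := fun k => bestPriceWithin {j | b j = k} p v)
        (fun _ _ => bot_le) (Finset.mem_univ (b j)))

end BestWithin

section Subadditivity

variable {n : ℕ} (B : BuyerRule n) {marg : Fin n → Measure ℝ} {κ : Type*} [Fintype κ]
  [DecidableEq κ] (b : Fin n → κ) (p : Fin n → ℝ≥0∞)

lemma robustRev_le_sum_expRev_halvedOn {F : κ → Measure (Fin n → ℝ)}
    (hF : ∀ k, Compatible marg (F k)) :
    robustRev B marg p ≤ ∑ k, 2 * expRev B (halvedOn {j | b j = k} p) (F k) := by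
  have := fun k => (hF k).1
  have hglue : Compatible marg (glueBlocks b F) :=
    ⟨inferInstance, fun j => (glueBlocks_map_eval b F j).trans ((hF (b j)).2 j)⟩
  calc robustRev B marg p ≤ expRev B p (glueBlocks b F) := iInf₂_le _ hglue
    _ ≤ ∫⁻ v, ∑ k, bestPriceWithin {j | b j = k} p v ∂glueBlocks b F :=
        lintegral_mono (revenue_le_sum_bestPriceWithin p B b)
    _ = ∑ k, ∫⁻ v, bestPriceWithin {j | b j = k} p v ∂F k := by
        rw [lintegral_finsetSum _ fun k _ => measurable_bestPriceWithin _ p]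
        refine Finset.sum_congr rfl fun k _ =>
          lintegral_glueBlocks b F (measurable_bestPriceWithin _ p) ?_
        simpa using dependsOn_bestPriceWithin {j | b j = k} p
    _ ≤ ∑ k, 2 * expRev B (halvedOn {j | b j = k} p) (F k) :=
        Finset.sum_le_sum fun k _ => lintegral_bestPriceWithin_le _ p B (F k)

theorem robustRev_le_sum_robustRev_halvedOn [∀ j, IsProbabilityMeasure (marg j)] :
    robustRev B marg p ≤ ∑ k, 2 * robustRev B marg (halvedOn {j | b j = k} p) := by
  have : Nonempty {F // Compatible marg F} := ⟨⟨_, compatible_pi marg⟩⟩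
  calc robustRev B marg p
      ≤ ⨅ F : κ → {F // Compatible marg F}, ∑ k, 2 * expRev B (halvedOn {j | b j = k} p) (F k) :=
        le_iInf fun F => robustRev_le_sum_expRev_halvedOn B b p fun k => (F k).2
    _ = ∑ k, 2 * robustRev B marg (halvedOn {j | b j = k} p) := by
        rw [ENNReal.iInf_pi_sum _ fun k (F : {F // Compatible marg F}) =>
          2 * expRev B (halvedOn {j | b j = k} p) F]
        refine Finset.sum_congr rfl fun k _ => ?_
        rw [robustRev, iInf_subtype', ENNReal.mul_iInf_of_ne two_ne_zero ENNReal.ofNat_ne_top]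

theorem optRobust_le_mul_card {A : ℝ≥0∞}
    (hA : ∀ p k, robustRev B marg (halvedOn {j | b j = k} p) ≤ A)
    [∀ j, IsProbabilityMeasure (marg j)] :
    optRobust B marg ≤ 2 * Fintype.card κ * A :=
  iSup_le fun p => calc
    robustRev B marg p ≤ ∑ k : κ, 2 * A := (robustRev_le_sum_robustRev_halvedOn B b p).trans
      (Finset.sum_le_sum fun k _ => mul_le_mul_right (hA p k) 2)
    _ = 2 * Fintype.card κ * A := by
      rw [Finset.sum_const, Finset.card_univ, nsmul_eq_mul]; ring

end Subadditivity

section Dyadic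

variable (M : ℝ≥0∞) (K : ℕ)

open Classical in
def dyadicIndex (m : ℝ≥0∞) : ℕ :=
  Nat.find (⟨K + 1, Or.inr rfl⟩ : ∃ k, M ≤ 2 ^ k * m ∨ k = K + 1)

lemma dyadicIndex_le (m : ℝ≥0∞) : dyadicIndex M K m ≤ K + 1 :=
  Nat.find_min' _ (Or.inr rfl)

lemma dyadicIndex_self : dyadicIndex M K M = 0 :=
  (Nat.find_eq_zero _).2 (Or.inl (by simp))

variable {M K} {m : ℝ≥0∞}

lemma le_two_pow_dyadicIndex_mul (h : dyadicIndex M K m ≠ K + 1) :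
    M ≤ 2 ^ dyadicIndex M K m * m :=
  (Nat.find_spec (⟨K + 1, Or.inr rfl⟩ : ∃ k, M ≤ 2 ^ k * m ∨ k = K + 1)).resolve_right h

lemma two_pow_dyadicIndex_mul_le (hm : m ≤ M) : 2 ^ dyadicIndex M K m * m ≤ 2 * M := by
  rcases h : dyadicIndex M K m with _ | k
  · simpa using hm.trans (le_mul_of_one_le_left' one_le_two)
  · have hk : ¬(M ≤ 2 ^ k * m ∨ k = K + 1) :=
      Nat.find_min _ (show k < dyadicIndex M K m by omega)
    rw [pow_succ', mul_assoc]
    exact mul_le_mul_right (not_le.1 (not_or.1 hk).1).le 2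

lemma le_two_mul_of_dyadicIndex_eq {m' : ℝ≥0∞} (hm : m ≤ M)
    (h : dyadicIndex M K m = dyadicIndex M K m') (h' : dyadicIndex M K m' ≠ K + 1) :
    m ≤ 2 * m' := by
  refine (ENNReal.mul_le_mul_iff_right (pow_ne_zero (dyadicIndex M K m) two_ne_zero)
    (ENNReal.pow_ne_top ENNReal.ofNat_ne_top)).1 ?_
  calc 2 ^ dyadicIndex M K m * m ≤ 2 * M := two_pow_dyadicIndex_mul_le hm
    _ ≤ 2 * (2 ^ dyadicIndex M K m * m') := by rw [h]; gcongr; exact le_two_pow_dyadicIndex_mul h'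
    _ = 2 ^ dyadicIndex M K m * (2 * m') := mul_left_comm _ _ _

lemma sum_le_of_dyadicIndex_eq {ι : Type*} {s : Finset ι} {f : ι → ℝ≥0∞}
    (hf : ∀ i ∈ s, f i ≤ M) (hs : s.card ≤ 2 ^ K) (h : ∀ i ∈ s, dyadicIndex M K (f i) = K + 1) :
    ∑ i ∈ s, f i ≤ M := by
  have hfi : ∀ i ∈ s, f i ≤ M / 2 ^ K := fun i hi => by
    refine (ENNReal.le_div_iff_mul_le (.inl (by simp)) (.inl (by simp))).2 ?_
    refine (ENNReal.mul_le_mul_iff_right two_ne_zero ENNReal.ofNat_ne_top).1 ?_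
    have := two_pow_dyadicIndex_mul_le (K := K) (hf i hi)
    rw [h i hi] at this
    exact le_of_eq_of_le (by ring) this
  calc ∑ i ∈ s, f i ≤ s.card • (M / 2 ^ K) := Finset.sum_le_card_nsmul _ _ _ hfi
    _ ≤ 2 ^ K * (M / 2 ^ K) := by rw [nsmul_eq_mul]; gcongr; exact_mod_cast hs
    _ ≤ M := ENNReal.mul_div_le

end Dyadic

theorem exists_class_pricing_optRobust_le {n : ℕ} (B : BuyerRule n) (marg : Fin n → Measure ℝ)
    [∀ j, IsProbabilityMeasure (marg j)] (hfin : ∀ j, Mye (marg j) ≠ ⊤) {κ : Type*} [Fintype κ]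
    [DecidableEq κ] (b : Fin n → κ) {k₀ : κ} {j₀ : Fin n} (hj₀ : b j₀ ≠ k₀)
    (hleft : ∑ j ∈ {j | b j = k₀}, Mye (marg j) ≤ Mye (marg j₀)) :
    ∃ k ≠ k₀, ∃ q : Fin n → ℝ≥0∞, (∀ j, b j ≠ k → q j = ⊤) ∧
      optRobust B marg ≤ 4 * Fintype.card κ * robustRev B marg q := by
  let P := {q : Fin n → ℝ≥0∞ // ∃ k ≠ k₀, ∀ j, b j ≠ k → q j = ⊤}
  have : Nonempty P := ⟨⟨fun _ => ⊤, b j₀, hj₀, fun _ _ => rfl⟩⟩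
  set A := ⨆ q : P, robustRev B marg q
  have hMA : Mye (marg j₀) ≤ A := by
    refine (Mye_le_iSup_robustRev_singlePrice B j₀).trans (iSup_le fun x => ?_)
    refine le_iSup_of_le (f := fun q : P => robustRev B marg q) ⟨singlePrice j₀ x, b j₀, hj₀,
      fun j hj => ?_⟩ le_rfl
    simp [singlePrice, show j ≠ j₀ by rintro rfl; exact hj rfl]
  have hclass : ∀ p k, robustRev B marg (halvedOn {j | b j = k} p) ≤ A := by
    intro p k
    by_cases hk : k = k₀
    · subst hk
      exact (robustRev_le_sum_Mye B fun j hj => halvedOn_of_notMem hj p).trans (hleft.trans hMA)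
    · exact le_iSup_of_le (f := fun q : P => robustRev B marg q)
        ⟨_, k, hk, fun j hj => halvedOn_of_notMem (by simpa using hj) p⟩ le_rfl
  have hA : A ≠ ⊤ := ne_top_of_le_ne_top (ENNReal.sum_ne_top.2 fun j _ => hfin j)
    (iSup_le fun q => robustRev_le_sum_Mye B (T := Finset.univ) (by simp))
  obtain ⟨⟨q, k, hk, hq⟩, hAq⟩ := ENNReal.exists_iSup_le_two_mul hA
  refine ⟨k, hk, q, hq, ?_⟩
  calc optRobust B marg ≤ 2 * Fintype.card κ * A := optRobust_le_mul_card B b hclass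
    _ ≤ 2 * Fintype.card κ * (2 * robustRev B marg q) := by gcongr
    _ = 4 * Fintype.card κ * robustRev B marg q := by ring

theorem exists_near_equal_bucket_pricing {n : ℕ} (B : BuyerRule n) (marg : Fin n → Measure ℝ)
    [∀ j, IsProbabilityMeasure (marg j)] (hn : n ≠ 0) (hfin : ∀ j, Mye (marg j) ≠ ⊤) :
    ∃ (S : Finset (Fin n)) (p : Fin n → ℝ≥0∞), (∀ j ∉ S, p j = ⊤) ∧
      (∀ i ∈ S, ∀ j ∈ S, Mye (marg i) ≤ 2 * Mye (marg j)) ∧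
      optRobust B marg ≤ 4 * (Nat.log 2 n + 3) * robustRev B marg p := by
  obtain ⟨j₀, -, hj₀⟩ := Finset.univ.exists_max_image (fun j => Mye (marg j))
    ⟨⟨0, Nat.pos_of_ne_zero hn⟩, Finset.mem_univ _⟩
  have hM : ∀ j, Mye (marg j) ≤ Mye (marg j₀) := fun j => hj₀ j (Finset.mem_univ j)
  set K := Nat.log 2 n + 1
  let b : Fin n → Fin (K + 2) := fun j =>
    ⟨dyadicIndex (Mye (marg j₀)) K (Mye (marg j)), Nat.lt_succ_of_le (dyadicIndex_le _ K _)⟩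
  have hb_last :
      ∀ j, b j = Fin.last (K + 1) ↔ dyadicIndex (Mye (marg j₀)) K (Mye (marg j)) = K + 1 :=
    fun j => Fin.ext_iff
  have hj₀_last : b j₀ ≠ Fin.last (K + 1) := by
    rw [Ne, hb_last, dyadicIndex_self]; omega
  have hleft : ∑ j ∈ {j | b j = Fin.last (K + 1)}, Mye (marg j) ≤ Mye (marg j₀) := by
    refine sum_le_of_dyadicIndex_eq (fun j _ => hM j) ?_ fun j hj => by simpa [hb_last] using hj
    exact (Finset.card_le_univ _).trans (by simpa using (Nat.lt_pow_succ_log_self one_lt_two n).le)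
  obtain ⟨k, hk, q, hq, hopt⟩ := exists_class_pricing_optRobust_le B marg hfin b hj₀_last hleft
  refine ⟨({j | b j = k} : Finset (Fin n)), q, fun j hj => hq j (by simpa using hj),
    fun i hi j hj => ?_, ?_⟩
  · simp only [Finset.mem_filter, Finset.mem_univ, true_and] at hi hj
    subst hi
    exact le_two_mul_of_dyadicIndex_eq (hM i) (Fin.ext_iff.1 hj).symm
      fun h => hk (hj.symm.trans ((hb_last j).2 h))
  · simpa [K, Fintype.card_fin, add_assoc] using hopt

lemma four_mul_log_add_three_le {n : ℕ} (hn : 2 ≤ n) :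
    (4 * (Nat.log 2 n + 3) : ℝ≥0∞) ≤ ENNReal.ofReal (24 * Real.log n) := by
  have hlog2 : 2 / 3 < Real.log 2 := by linarith [Real.log_two_gt_d9]
  have hlogn : Real.log 2 ≤ Real.log n := Real.log_le_log two_pos (by exact_mod_cast hn)
  have hL : (Nat.log 2 n : ℝ) * Real.log 2 ≤ Real.log n := by
    have := Real.natLog_le_logb n 2
    rwa [Nat.cast_ofNat, Real.logb, le_div_iff₀ (by linarith)] at this
  rw [show (4 * (Nat.log 2 n + 3) : ℝ≥0∞) = ENNReal.ofReal (4 * (Nat.log 2 n + 3)) by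
    rw [ENNReal.ofReal_mul (by norm_num)]; norm_cast]
  refine ENNReal.ofReal_le_ofReal ?_
  nlinarith

theorem near_equal_myerson_bucket_pricing_is_log_max_min_optimal :
    ∃ C : ℝ, 0 < C ∧
      ∀ (n : ℕ), 2 ≤ n →
        ∀ (B : BuyerRule n) (marg : Fin n → Measure ℝ),
          (∀ j, IsProbabilityMeasure (marg j)) →
          (∀ j, marg j (Set.Iio 0) = 0) →
          (∀ j, Mye (marg j) ≠ ⊤) →
          ∃ (S : Finset (Fin n)) (p : Fin n → ℝ≥0∞),
            (∀ j : Fin n, j ∉ S → p j = ⊤) ∧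
            (∀ i ∈ S, ∀ j ∈ S, Mye (marg i) ≤ 2 * Mye (marg j)) ∧
            optRobust B marg ≤ ENNReal.ofReal (C * Real.log n) * robustRev B marg p := by
  refine ⟨24, by norm_num, fun n hn B marg hprob _ hfin => ?_⟩
  have := hprob
  obtain ⟨S, p, hS, hratio, hopt⟩ := exists_near_equal_bucket_pricing B marg (by omega) hfin
  exact ⟨S, p, hS, hratio, hopt.trans (mul_le_mul_left (four_mul_log_add_three_le hn) _)⟩
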